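/- arXiv:1902.05345 — 2 statements merged into one kernel-verified Lean document; each statement's English description precedes it below -/
import Mathlib

section
/- The SDP value t*(G) = min{ t : [[t,1ᵀ],[1,X]] ∈ X^C } is a lower bound on the chromatic number χ(G). -/
def isSSPM {V : Type*} (G : SimpleGraph V) (k : ℕ) (S : Matrix V (Fin k) ℝ) : Prop :=
  (∀ i j, S i j = 0 ∨ S i j = 1) ∧ (∀ i, ∑ j, S i j = 1) ∧
  (∀ j, ∀ i i', G.Adj i i' → S i j = 0 ∨ S i' j = 0)

def border (n : ℕ) (t : ℝ) (X : Matrix (Fin n) (Fin n) ℝ) :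
    Matrix (Unit ⊕ Fin n) (Unit ⊕ Fin n) ℝ :=
  Matrix.fromBlocks (Matrix.of fun (_ : Unit) (_ : Unit) => t)
    (Matrix.of fun (_ : Unit) (_ : Fin n) => (1 : ℝ))
    (Matrix.of fun (_ : Fin n) (_ : Unit) => (1 : ℝ)) X

def Xc (n : ℕ) (G : SimpleGraph (Fin n)) : Set (Matrix (Unit ⊕ Fin n) (Unit ⊕ Fin n) ℝ) :=
  {M | ∃ (t : ℝ) (X : Matrix (Fin n) (Fin n) ℝ), M = border n t X ∧ M.PosSemidef ∧
    (∀ i, X i i = 1) ∧ ∀ i j, G.Adj i j → X i j = 0}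

/-- The SDP value `t*(G) = min{t : [[t,1ᵀ],[1,X]] ∈ X^C}` is a lower bound on the
chromatic number `χ(G)`, the minimum number of stable sets partitioning the vertices. -/
theorem stmt7 (n : ℕ) (G : SimpleGraph (Fin n)) (tstar : ℝ) (chi : ℕ)
    (ht : IsLeast {t : ℝ | ∃ X : Matrix (Fin n) (Fin n) ℝ, border n t X ∈ Xc n G} tstar)
    (hchi : IsLeast {k : ℕ | ∃ S : Matrix (Fin n) (Fin k) ℝ, isSSPM G k S} chi) :
    tstar ≤ (chi : ℝ) := by
  obtain ⟨⟨S, hS01, hSrow, hSstab⟩, -⟩ := hchi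
  apply ht.2
  set A : Matrix (Unit ⊕ Fin n) (Fin chi) ℝ :=
    fun p j => Sum.elim (fun _ => (1 : ℝ)) (fun i => S i j) p with hA
  have key : border n (chi : ℝ) (S * S.transpose) = A * A.conjTranspose := by
    ext p q
    cases p with
    | inl u =>
      cases q with
      | inl v =>
        simp only [Matrix.mul_apply, Matrix.conjTranspose_apply]
        simp [border, Matrix.mul_apply, Matrix.conjTranspose_apply, hA]
      | inr j =>
        simp only [Matrix.mul_apply, Matrix.conjTranspose_apply]
        simp only [border, Matrix.fromBlocks_apply₁₂, Matrix.of_apply,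
          Matrix.mul_apply, Matrix.conjTranspose_apply, hA, Sum.elim_inl, Sum.elim_inr,
          one_mul, RCLike.star_def, starRingEnd_apply, star_trivial]
        exact (hSrow j).symm
    | inr i =>
      cases q with
      | inl v =>
        simp only [Matrix.mul_apply, Matrix.conjTranspose_apply]
        simp only [border, Matrix.fromBlocks_apply₂₁, Matrix.of_apply,
          Matrix.mul_apply, Matrix.conjTranspose_apply, hA, Sum.elim_inl, Sum.elim_inr,
          mul_one, star_trivial]
        exact (hSrow i).symm
      | inr j =>
        simp only [Matrix.mul_apply, Matrix.conjTranspose_apply]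
        simp [border, Matrix.mul_apply, Matrix.conjTranspose_apply, hA,
          Matrix.transpose_apply]
  refine ⟨S * S.transpose, (chi : ℝ), S * S.transpose, rfl, ?_, ?_, ?_⟩
  · rw [key]
    exact Matrix.posSemidef_self_mul_conjTranspose A
  · intro i
    rw [Matrix.mul_apply]
    have : ∀ j, S i j * S.transpose j i = S i j := by
      intro j
      rw [Matrix.transpose_apply]
      rcases hS01 i j with h | h <;> simp [h]
    rw [Finset.sum_congr rfl fun j _ => this j]
    exact hSrow i
  · intro i j hij
    rw [Matrix.mul_apply]
    apply Finset.sum_eq_zero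
    intro k _
    rw [Matrix.transpose_apply]
    rcases hSstab k i j hij with h | h <;> simp [h]
end

section
/- The theta function upper-bounds the stability number: α(G) ≤ ϑ(G) = max{ trace(X) : X ∈ X^S }. -/
def thetaBody (n : ℕ) (G : SimpleGraph (Fin n)) : Set (Matrix (Fin n) (Fin n) ℝ) :=
  {X | (∀ i j, G.Adj i j → X i j = 0) ∧
    (Matrix.fromBlocks (Matrix.of fun (_ : Unit) (_ : Unit) => (1 : ℝ))
      (Matrix.of fun (_ : Unit) (j : Fin n) => X j j)
      (Matrix.of fun (i : Fin n) (_ : Unit) => X i i) X).PosSemidef}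

lemma vecMulVec_posSemidef {m : Type*} [Fintype m] (w : m → ℝ) :
    (Matrix.vecMulVec w w).PosSemidef := by
  rw [Matrix.posSemidef_iff_dotProduct_mulVec]
  constructor
  · ext i j
    simp [Matrix.vecMulVec, Matrix.IsHermitian, Matrix.conjTranspose, mul_comm]
  · intro x
    have h : ∀ p, (Matrix.mulVec (Matrix.vecMulVec w w) x) p = w p * (∑ q, w q * x q) := by
      intro p
      simp [Matrix.mulVec, Matrix.vecMulVec, dotProduct, Finset.mul_sum, mul_assoc]
    have : dotProduct (star x) (Matrix.mulVec (Matrix.vecMulVec w w) x) = (∑ q, w q * x q) * (∑ q, w q * x q) := by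
      simp only [dotProduct, h, star, Pi.star_apply, star_trivial]
      rw [Finset.mul_sum]
      apply Finset.sum_congr rfl
      intro p _
      ring
    rw [this]
    exact mul_self_nonneg _

/-- The theta function upper-bounds the stability number:
`α(G) ≤ ϑ(G) = max{trace(X) : X ∈ X^S}`. -/
theorem stmt18 (n : ℕ) (G : SimpleGraph (Fin n)) (a : ℕ) (theta : ℝ)
    (ha : IsGreatest {k : ℕ | ∃ s : Finset (Fin n),
        (∀ i ∈ s, ∀ j ∈ s, ¬ G.Adj i j) ∧ s.card = k} a)
    (htheta : IsGreatest {x : ℝ | ∃ X ∈ thetaBody n G, x = X.trace} theta) :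
    (a : ℝ) ≤ theta := by
  obtain ⟨s, hstab, hcard⟩ := ha.1
  set v : Fin n → ℝ := fun i => if i ∈ s then 1 else 0 with hv
  set X : Matrix (Fin n) (Fin n) ℝ := Matrix.of fun i j => v i * v j with hX
  have hdiag : ∀ i, X i i = v i := by
    intro i
    by_cases h : i ∈ s <;> simp [hX, hv, h]
  have hvv : ∀ i, v i * v i = v i := by
    intro i
    by_cases h : i ∈ s <;> simp [hv, h]
  have hmem : X ∈ thetaBody n G := by
    constructor
    · intro i j hadj
      by_cases hi : i ∈ s
      · have hj : j ∉ s := fun hj => hstab i hi j hj hadj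
        simp [hX, hv, hj]
      · simp [hX, hv, hi]
    · set w : Unit ⊕ Fin n → ℝ := Sum.elim (fun _ => 1) v with hw
      have : (Matrix.fromBlocks (Matrix.of fun (_ : Unit) (_ : Unit) => (1 : ℝ))
          (Matrix.of fun (_ : Unit) (j : Fin n) => X j j)
          (Matrix.of fun (i : Fin n) (_ : Unit) => X i i) X) = Matrix.vecMulVec w w := by
        ext p q
        rcases p with p | p <;> rcases q with q | q <;>
          simp [Matrix.vecMulVec, hw, hdiag, hX, hvv]
      rw [this]
      exact vecMulVec_posSemidef w
  have htr : X.trace = (a : ℝ) := by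
    rw [Matrix.trace]
    have : ∀ i, Matrix.diag X i = v i := hdiag
    simp only [this]
    rw [hv]
    rw [Finset.sum_ite_mem]
    simp [hcard]
  have : (a : ℝ) ∈ {x : ℝ | ∃ X ∈ thetaBody n G, x = X.trace} :=
    ⟨X, hmem, htr.symm⟩
  exact htheta.2 this
end
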